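/- Let β(ε) be the infimum of Lebesgue measures of Borel sets A ⊆ ℝ such that the standard Gaussian measure of ℝ \ A is at most ε. Then for all ε ∈ (0,1), β(ε) = 2·Q^{−1}(ε/2), where Q^{−1} is the inverse of the Gaussian Q-function. -/
import Mathlib


open MeasureTheory Real Set

/-- The standard Gaussian density `φ(x) = (1/√(2π))·exp(−x²/2)`. -/
noncomputable def gaussPDF (x : ℝ) : ℝ := (Real.sqrt (2 * Real.pi))⁻¹ * Real.exp (-x ^ 2 / 2)

/-- The Gaussian Q-function `Q(τ) = ∫_τ^∞ φ(x) dx`. -/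
noncomputable def gaussQ (τ : ℝ) : ℝ := ∫ x in Set.Ioi τ, gaussPDF x

/-- The Gaussian Mills ratio `R(τ) = Q(τ)/φ(τ)`. -/
noncomputable def millsR (τ : ℝ) : ℝ := gaussQ τ / gaussPDF τ

lemma gaussPDF_eq : gaussPDF = ProbabilityTheory.gaussianPDFReal 0 1 := by
  funext x
  simp [gaussPDF, ProbabilityTheory.gaussianPDFReal]

lemma gaussPDF_pos (x : ℝ) : 0 < gaussPDF x := by
  rw [gaussPDF_eq]; exact ProbabilityTheory.gaussianPDFReal_pos 0 1 x one_ne_zero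

lemma gaussPDF_neg (x : ℝ) : gaussPDF (-x) = gaussPDF x := by
  simp [gaussPDF]

lemma gaussPDF_integrable : Integrable gaussPDF := by
  rw [gaussPDF_eq]; exact ProbabilityTheory.integrable_gaussianPDFReal 0 1

lemma gaussPDF_continuous : Continuous gaussPDF := by
  unfold gaussPDF; fun_prop

lemma gaussPDF_anti {a x : ℝ} (ha : 0 ≤ a) (h : a ≤ |x|) : gaussPDF x ≤ gaussPDF a := by
  unfold gaussPDF
  have h2 : a ^ 2 ≤ x ^ 2 := by
    rw [← sq_abs x]; exact pow_le_pow_left₀ ha h 2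
  have : Real.exp (-x ^ 2 / 2) ≤ Real.exp (-a ^ 2 / 2) := by
    apply Real.exp_le_exp.2; linarith
  have hc : (0:ℝ) < (Real.sqrt (2 * Real.pi))⁻¹ := by
    positivity
  nlinarith [this, hc]

lemma nu_apply (s : Set ℝ) :
    ProbabilityTheory.gaussianReal 0 1 s = ENNReal.ofReal (∫ x in s, gaussPDF x) := by
  rw [gaussPDF_eq]
  exact ProbabilityTheory.gaussianReal_apply_eq_integral 0 one_ne_zero s

lemma gaussQ_nonneg (τ : ℝ) : 0 ≤ gaussQ τ :=
  setIntegral_nonneg measurableSet_Ioi fun x _ => (gaussPDF_pos x).le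

lemma gaussPDF_abs (x : ℝ) : gaussPDF |x| = gaussPDF x := by
  simp [gaussPDF, sq_abs]

lemma integral_Iio_gaussPDF (τ : ℝ) : ∫ x in Iio (-τ), gaussPDF x = gaussQ τ := by
  rw [setIntegral_congr_set Iio_ae_eq_Iic]
  have := integral_comp_neg_Iic (-τ) gaussPDF
  simp only [neg_neg] at this
  unfold gaussQ
  rw [← this]
  exact setIntegral_congr_fun measurableSet_Iic fun x _ => (gaussPDF_neg x).symm

lemma gaussQ_strict_anti {a b : ℝ} (hab : a < b) : gaussQ b < gaussQ a := by
  have hsplit : Ioi a = Ioc a b ∪ Ioi b := (Set.Ioc_union_Ioi_eq_Ioi hab.le).symm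
  have hdisj : Disjoint (Ioc a b) (Ioi b) := by
    apply Set.disjoint_left.2
    intro x hx hx'
    exact absurd hx.2 (not_le.2 hx')
  have h1 : gaussQ a = (∫ x in Ioc a b, gaussPDF x) + gaussQ b := by
    unfold gaussQ
    rw [hsplit, setIntegral_union hdisj measurableSet_Ioi
      gaussPDF_integrable.integrableOn gaussPDF_integrable.integrableOn]
  have h2 : 0 < ∫ x in Ioc a b, gaussPDF x := by
    rw [← intervalIntegral.integral_of_le hab.le]
    apply intervalIntegral.intervalIntegral_pos_of_pos_on
      (gaussPDF_continuous.intervalIntegrable a b)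
      (fun x _ => gaussPDF_pos x) hab
  linarith

lemma gaussQ_zero : gaussQ 0 = 1 / 2 := by
  have h1 : ∫ x, gaussPDF x = 1 := by
    rw [gaussPDF_eq]; exact ProbabilityTheory.integral_gaussianPDFReal_eq_one 0 one_ne_zero
  have h2 : (∫ x in Iic 0, gaussPDF x) + ∫ x in Ioi (0:ℝ), gaussPDF x = 1 := by
    rw [intervalIntegral.integral_Iic_add_Ioi gaussPDF_integrable.integrableOn
      gaussPDF_integrable.integrableOn, h1]
  have h3 : ∫ x in Iic (0:ℝ), gaussPDF x = gaussQ 0 := by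
    rw [← setIntegral_congr_set Iio_ae_eq_Iic]
    have := integral_Iio_gaussPDF 0
    simpa using this
  rw [h3] at h2
  rw [show (∫ x in Ioi (0:ℝ), gaussPDF x) = gaussQ 0 from rfl] at h2
  linarith

lemma nu_compl_Icc {s : ℝ} (hs : 0 ≤ s) :
    ProbabilityTheory.gaussianReal 0 1 (Icc (-s) s)ᶜ = ENNReal.ofReal (2 * gaussQ s) := by
  have hcompl : (Icc (-s) s)ᶜ = Iio (-s) ∪ Ioi s := by
    ext x
    simp only [mem_compl_iff, mem_Icc, not_and_or, not_le, mem_union, mem_Iio, mem_Ioi]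
  have hdisj : Disjoint (Iio (-s)) (Ioi s) := by
    apply Set.disjoint_left.2
    intro x hx hx'
    simp only [mem_Iio] at hx
    simp only [mem_Ioi] at hx'
    linarith
  rw [hcompl, measure_union hdisj measurableSet_Ioi, nu_apply, nu_apply,
    integral_Iio_gaussPDF]
  rw [show (∫ x in Ioi s, gaussPDF x) = gaussQ s from rfl]
  rw [← ENNReal.ofReal_add (gaussQ_nonneg s) (gaussQ_nonneg s)]
  ring_nf

/-- Let `β(ε)` be the infimum of Lebesgue measures of Borel sets `A ⊆ ℝ` whose
complement has standard Gaussian measure at most `ε`.  Then for all `ε ∈ (0,1)`,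
`β(ε) = 2·Q⁻¹(ε/2)`, where `Q⁻¹` is the inverse of the Gaussian Q-function. -/
theorem beta_gaussian_lebesgue (Qinv : ℝ → ℝ)
    (hQinv : ∀ p ∈ Set.Ioo (0 : ℝ) 1, gaussQ (Qinv p) = p) :
    ∀ ε ∈ Set.Ioo (0 : ℝ) 1,
      (⨅ (A : Set ℝ) (_ : MeasurableSet A)
          (_ : ProbabilityTheory.gaussianReal 0 1 Aᶜ ≤ ENNReal.ofReal ε), volume A)
        = ENNReal.ofReal (2 * Qinv (ε / 2)) := by
  intro ε hε
  obtain ⟨hε0, hε1⟩ := hε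
  set τ := Qinv (ε / 2) with hτdef
  have hτQ : gaussQ τ = ε / 2 := hQinv (ε / 2) ⟨by linarith, by linarith⟩
  have hτpos : 0 < τ := by
    by_contra h
    push_neg at h
    have : gaussQ 0 ≤ gaussQ τ := by
      rcases eq_or_lt_of_le h with h' | h'
      · rw [h']
      · exact (gaussQ_strict_anti h').le
    rw [gaussQ_zero, hτQ] at this
    linarith
  set ν := ProbabilityTheory.gaussianReal 0 1 with hνdef
  apply le_antisymm
  · -- upper bound: take A = Icc (-τ) τ
    have hcond : ν (Icc (-τ) τ)ᶜ ≤ ENNReal.ofReal ε := by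
      rw [hνdef, nu_compl_Icc hτpos.le, hτQ]
      apply le_of_eq
      congr 1
      ring
    refine iInf_le_of_le (Icc (-τ) τ) (iInf_le_of_le measurableSet_Icc
      (iInf_le_of_le hcond ?_))
    rw [Real.volume_Icc]
    apply le_of_eq
    congr 1
    ring
  · -- lower bound
    refine le_iInf fun A => le_iInf fun hA => le_iInf fun hcond => ?_
    by_contra hlt
    push_neg at hlt
    have hAfin : volume A < ⊤ := lt_of_lt_of_le hlt le_top
    set ℓ : ℝ := (volume A).toReal with hℓdef
    have hℓ0 : 0 ≤ ℓ := ENNReal.toReal_nonneg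
    have hvolA : volume A = ENNReal.ofReal ℓ := (ENNReal.ofReal_toReal hAfin.ne).symm
    have hℓlt : ℓ < 2 * τ := by
      rw [hvolA] at hlt
      exact (ENNReal.ofReal_lt_ofReal_iff (by linarith)).1 hlt
    set s : ℝ := ℓ / 2 with hsdef
    have hs0 : 0 ≤ s := by positivity
    have hsτ : s < τ := by
      rw [hsdef]; linarith
    set I : Set ℝ := Icc (-s) s with hIdef
    have hI : MeasurableSet I := measurableSet_Icc
    have hvolI : volume I = ENNReal.ofReal ℓ := by
      rw [hIdef, Real.volume_Icc]
      congr 1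
      rw [hsdef]; ring
    -- volume (A \ I) = volume (I \ A)
    have hAI_fin : volume (A ∩ I) ≠ ⊤ := by
      exact (lt_of_le_of_lt (measure_mono Set.inter_subset_left) hAfin).ne
    have hvol_diff : volume (A \ I) = volume (I \ A) := by
      have h1 : volume (A ∩ I) + volume (A \ I) = volume A :=
        measure_inter_add_diff A hI
      have h2 : volume (I ∩ A) + volume (I \ A) = volume I :=
        measure_inter_add_diff I hA
      rw [Set.inter_comm I A] at h2
      rw [hvolA] at h1
      rw [hvolI] at h2
      have := h1.trans h2.symm
      exact (ENNReal.add_right_inj hAI_fin).1 this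
    -- key comparison ν A ≤ ν I
    have key : ν A ≤ ν I := by
      have hν_eq : ∀ s' : Set ℝ, ν s' = ∫⁻ x in s', ENNReal.ofReal (gaussPDF x) := by
        intro s'
        rw [hνdef, gaussPDF_eq]
        exact ProbabilityTheory.gaussianReal_apply 0 one_ne_zero s'
      have h1 : ν (A ∩ I) + ν (A \ I) = ν A := measure_inter_add_diff A hI
      have h2 : ν (I ∩ A) + ν (I \ A) = ν I := measure_inter_add_diff I hA
      have hAdiff : ν (A \ I) ≤ ENNReal.ofReal (gaussPDF s) * volume (A \ I) := by
        rw [hν_eq, ← setLIntegral_const]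
        apply setLIntegral_mono measurable_const
        intro x hx
        apply ENNReal.ofReal_le_ofReal
        apply gaussPDF_anti hs0
        have : x ∉ I := hx.2
        rw [hIdef, Set.mem_Icc, not_and_or, not_le, not_le] at this
        rcases this with h | h
        · rw [abs_of_nonpos (by linarith)]; linarith
        · rw [abs_of_pos (by linarith)]; linarith
      have hIdiff : ENNReal.ofReal (gaussPDF s) * volume (I \ A) ≤ ν (I \ A) := by
        rw [hν_eq, ← setLIntegral_const]
        apply setLIntegral_mono gaussPDF_continuous.measurable.ennreal_ofReal
        intro x hx
        apply ENNReal.ofReal_le_ofReal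
        have hxI : x ∈ I := hx.1
        rw [hIdef, Set.mem_Icc] at hxI
        rw [← gaussPDF_abs x]
        have habs : |x| ≤ |s| := by
          rw [abs_of_nonneg hs0]
          exact abs_le.2 ⟨hxI.1, hxI.2⟩
        exact gaussPDF_anti (abs_nonneg x) habs
      calc ν A = ν (A ∩ I) + ν (A \ I) := h1.symm
        _ ≤ ν (A ∩ I) + ENNReal.ofReal (gaussPDF s) * volume (A \ I) := by
            exact add_le_add le_rfl hAdiff
        _ = ν (I ∩ A) + ENNReal.ofReal (gaussPDF s) * volume (I \ A) := by
            rw [Set.inter_comm, hvol_diff]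
        _ ≤ ν (I ∩ A) + ν (I \ A) := add_le_add le_rfl hIdiff
        _ = ν I := h2
    -- deduce ν Iᶜ ≤ ν Aᶜ
    have hprob : IsProbabilityMeasure ν := by
      rw [hνdef]; infer_instance
    have hcompl_le : ν Iᶜ ≤ ν Aᶜ := by
      rw [measure_compl hI (measure_ne_top ν I), measure_compl hA (measure_ne_top ν A)]
      exact tsub_le_tsub_left key _
    have hIc : ν Iᶜ = ENNReal.ofReal (2 * gaussQ s) := by
      rw [hνdef, hIdef]
      exact nu_compl_Icc hs0
    have hQs : ε < 2 * gaussQ s := by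
      have := gaussQ_strict_anti hsτ
      rw [hτQ] at this
      linarith
    have : ENNReal.ofReal (2 * gaussQ s) ≤ ENNReal.ofReal ε := by
      rw [← hIc]
      exact le_trans hcompl_le hcond
    rw [ENNReal.ofReal_le_ofReal_iff hε0.le] at this
    linarith
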